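/- For each r ∈ (0,1) there exists θ ∈ (0, π/2) such that on the sector D_{r,θ} = {z : 0 < |z| ≤ r, |arg z| ≤ θ} the following hold: (a) S(z) ≠ 0 and in particular A_k(z) ≠ 0 for all k ≥ 0; (b) B(z) ≠ 0, where B = lim_{n→∞} ∏_{j=1}^{n} B_j; (c) the products ∏_{j=1}^{n} A_j(z)^{−j} converge uniformly on D_{r,θ} as n → ∞ to a bounded holomorphic function C with C(z) ≠ 0 for all z ∈ D_{r,θ}. -/

import Mathlib

/-!
On `‖w‖ ≤ ρ < 1` the generating function satisfies `‖f w‖ ≤ c ‖w‖` with `c = p₁ + (1 - p₁) ρ < 1`,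
so the iterates `f_j` decay geometrically and every factor `A_j`, `B_j` is `1 + O(cʲ)` on the disc
`‖z‖ < ρ`. Infinite products of nonvanishing factors of this kind converge to nonzero limits, and
since `j cʲ` is summable the same holds, locally uniformly, for `∏ A_j^{-j}`. On the segment
`[0, r]` all factors are real and `≥ 1`; as only finitely many of them can vanish anywhere on the
disc, they are all nonzero on a neighbourhood of that compact segment, and this neighbourhood
contains a thin sector `|arg z| ≤ θ`.
-/

open Filter Topology Metric Set

lemma tsum_eq_add_tsum_ite_one_lt {α : Type*} [AddCommGroup α] [TopologicalSpace α]
    [IsTopologicalAddGroup α] [T2Space α] {F : ℕ → α} (hF : Summable F) (h0 : F 0 = 0) :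
    ∑' n, F n = F 1 + ∑' n, if 1 < n then F n else 0 := by
  rw [hF.tsum_eq_add_tsum_ite 1]
  congr 1
  refine tsum_congr fun n => ?_
  rcases n with _ | _ | n <;> simp [h0]

lemma Finset.prod_Icc_one_eq_prod_range {M : Type*} [CommMonoid M] (g : ℕ → M) (n : ℕ) :
    ∏ j ∈ Finset.Icc 1 n, g j = ∏ j ∈ Finset.range n, g (j + 1) := by
  rw [← Finset.Ico_add_one_right_eq_Icc, Finset.prod_Ico_eq_prod_range]
  simp [add_comm]

lemma ne_zero_of_tendsto_prod_range {a : ℕ → ℂ} {L : ℂ} (hne : ∀ j, a j ≠ 0)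
    (hs : Summable fun j => ‖a j - 1‖)
    (h : Tendsto (fun n => ∏ j ∈ Finset.range n, a j) atTop (𝓝 L)) : L ≠ 0 := by
  have h' := (multipliable_one_add_of_summable hs).hasProd.tendsto_prod_nat
  simp only [add_sub_cancel] at h'
  rw [tendsto_nhds_unique h h']
  simpa using tprod_one_add_ne_zero_of_summable (f := fun j => a j - 1) (by simpa using hne) hs

lemma norm_zpow_neg_sub_one_le {w : ℂ} {n : ℕ} {ε : ℝ} (hw : ‖w - 1‖ ≤ ε) (hε : ε ≤ 1 / 2)
    (hnε : n * ε ≤ 1 / 2) : ‖w ^ (-(n : ℤ)) - 1‖ ≤ 3 * (n * ε) := by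
  have hw0 : w ≠ 0 := by
    rintro rfl
    norm_num at hw
    linarith
  have hlog : ‖Complex.log w‖ ≤ 3 / 2 * ε := by
    simpa using (Complex.norm_log_one_add_half_le_self (z := w - 1) (hw.trans hε)).trans
      (by gcongr)
  have hexp : w ^ (-(n : ℤ)) = Complex.exp (↑(-(n : ℤ)) * Complex.log w) := by
    rw [Complex.exp_int_mul, Complex.exp_log hw0]
  have hnorm : ‖(↑(-(n : ℤ)) : ℂ) * Complex.log w‖ ≤ n * (3 / 2 * ε) := by
    push_cast
    rw [norm_mul, norm_neg, Complex.norm_natCast]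
    gcongr
  rw [hexp]
  refine (Complex.norm_exp_sub_one_le (hnorm.trans (by linarith))).trans ?_
  linarith

lemma hasProdLocallyUniformlyOn_of_eventually_norm_sub_one_le {α R : Type*} [TopologicalSpace α]
    [LocallyCompactSpace α] [NormedCommRing R] [NormOneClass R] [CompleteSpace R]
    {F : ℕ → α → R} {W : Set α} {u : ℕ → ℝ} (hW : IsOpen W) (hF : ∀ j, ContinuousOn (F j) W)
    (hu : Summable u) (hb : ∀ᶠ j in atTop, ∀ z ∈ W, ‖F j z - 1‖ ≤ u j) :
    HasProdLocallyUniformlyOn F (fun z => ∏' j, F j z) W := by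
  simpa using hu.hasProdLocallyUniformlyOn_nat_one_add hW hb fun j => (hF j).sub continuousOn_const

lemma exists_sector_subset_compact {W : Set ℂ} (hW : IsOpen W) {r : ℝ} (hr : 0 < r)
    (hrW : Complex.ofReal '' Icc 0 r ⊆ W) :
    ∃ θ K, 0 < θ ∧ θ < Real.pi / 2 ∧ IsCompact K ∧ K ⊆ W ∧
      {z : ℂ | z ≠ 0 ∧ ‖z‖ ≤ r ∧ |z.arg| ≤ θ} ⊆ K := by
  have hI : IsCompact (Complex.ofReal '' Icc 0 r) := isCompact_Icc.image Complex.continuous_ofReal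
  obtain ⟨δ, hδ, hδW⟩ := hI.exists_cthickening_subset_open hW hrW
  refine ⟨min 1 (δ / r), _, lt_min one_pos (div_pos hδ hr),
    (min_le_left _ _).trans_lt (by linarith [Real.pi_gt_three]), hI.cthickening, hδW, ?_⟩
  rintro z ⟨-, hzr, hzθ⟩
  refine mem_cthickening_of_dist_le z ‖z‖ δ _ ⟨‖z‖, ⟨norm_nonneg z, hzr⟩, rfl⟩ ?_
  have hz : z - ‖z‖ = ‖z‖ * (Complex.exp (Complex.I * z.arg) - 1) := by
    rw [mul_sub, mul_one, mul_comm Complex.I, Complex.norm_mul_exp_arg_mul_I]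
  calc dist z ‖z‖ = ‖z‖ * ‖Complex.exp (Complex.I * z.arg) - 1‖ := by
        rw [dist_eq_norm, hz, norm_mul, Complex.norm_of_nonneg (norm_nonneg z)]
    _ ≤ r * (δ / r) := by
        gcongr
        exact Real.norm_exp_I_mul_ofReal_sub_one_le.trans (hzθ.trans (min_le_right _ _))
    _ = δ := mul_div_cancel₀ δ hr.ne'

lemma norm_iterate_le {E : Type*} [SeminormedAddGroup E] {f : E → E} {ρ c : ℝ} (hc0 : 0 ≤ c)
    (hc1 : c ≤ 1) (hf : ∀ w, ‖w‖ ≤ ρ → ‖f w‖ ≤ c * ‖w‖) (n : ℕ) {z : E} (hz : ‖z‖ ≤ ρ) :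
    ‖f^[n] z‖ ≤ c ^ n * ‖z‖ := by
  induction n with
  | zero => simp
  | succ n ih =>
    have hn : ‖f^[n] z‖ ≤ ρ :=
      ih.trans ((mul_le_of_le_one_left (norm_nonneg z) (pow_le_one₀ hc0 hc1)).trans hz)
    rw [Function.iterate_succ_apply', pow_succ', mul_assoc]
    exact (hf _ hn).trans (mul_le_mul_of_nonneg_left ih hc0)

lemma iterate_eq_pow_mul_prod {M : Type*} [CommMonoid M] {f H : M → M} {s : Set M} {a : M}
    (hs : MapsTo f s s) (hf : ∀ w ∈ s, f w = a * w * H w) (n : ℕ) {z : M} (hz : z ∈ s) :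
    f^[n] z = a ^ n * z * ∏ j ∈ Finset.range n, H (f^[j] z) := by
  induction n with
  | zero => simp
  | succ n ih =>
    rw [Function.iterate_succ_apply', hf _ (hs.iterate n hz), Finset.prod_range_succ, pow_succ]
    nth_rewrite 1 [ih]
    ac_rfl

/-- `A_j = 1 + p₁⁻¹ • tailPowerSeries p 1 ∘ f_j` and
`B_n = 1 + q_ν⁻¹ • tailPowerSeries q ν ∘ f_n`. -/
noncomputable def tailPowerSeries (v : ℕ → ℝ) (m : ℕ) (w : ℂ) : ℂ :=
  ∑' l, if m < l then (v l : ℂ) * w ^ (l - m) else 0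

section TailPowerSeries

variable {v : ℕ → ℝ} {m : ℕ}

lemma summable_ite_lt (hv0 : ∀ l, 0 ≤ v l) (hv : Summable v) :
    Summable fun l => if m < l then v l else 0 :=
  hv.of_nonneg_of_le (fun l => by split_ifs <;> simp [hv0 l])
    (fun l => by split_ifs <;> simp [hv0 l])

lemma norm_tailPowerSeries_term_le (hv0 : ∀ l, 0 ≤ v l) {w : ℂ} (hw : ‖w‖ ≤ 1) (l : ℕ) :
    ‖if m < l then (v l : ℂ) * w ^ (l - m) else 0‖ ≤ (if m < l then v l else 0) * ‖w‖ := by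
  split_ifs with h
  · rw [norm_mul, norm_pow, Complex.norm_of_nonneg (hv0 l)]
    exact mul_le_mul_of_nonneg_left (pow_le_of_le_one (norm_nonneg w) hw (Nat.sub_ne_zero_of_lt h))
      (hv0 l)
  · simp

lemma norm_tailPowerSeries_le (hv0 : ∀ l, 0 ≤ v l) (hv : Summable v) {w : ℂ} (hw : ‖w‖ ≤ 1) :
    ‖tailPowerSeries v m w‖ ≤ (∑' l, if m < l then v l else 0) * ‖w‖ := by
  rw [← tsum_mul_right]
  exact tsum_of_norm_bounded ((summable_ite_lt hv0 hv).mul_right _).hasSum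
    (norm_tailPowerSeries_term_le hv0 hw)

lemma norm_tailPowerSeries_le_norm (hv0 : ∀ l, 0 ≤ v l) (hv : Summable v) (hv1 : ∑' l, v l ≤ 1)
    {w : ℂ} (hw : ‖w‖ ≤ 1) : ‖tailPowerSeries v m w‖ ≤ ‖w‖ := by
  refine (norm_tailPowerSeries_le hv0 hv hw).trans (mul_le_of_le_one_left (norm_nonneg w) ?_)
  refine le_trans (Summable.tsum_le_tsum (fun l => ?_) (summable_ite_lt hv0 hv) hv) hv1
  split_ifs <;> simp [hv0 l]

lemma differentiableOn_tailPowerSeries (hv0 : ∀ l, 0 ≤ v l) (hv : Summable v) :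
    DifferentiableOn ℂ (tailPowerSeries v m) (ball 0 1) := by
  refine Complex.differentiableOn_tsum_of_summable_norm (summable_ite_lt (m := m) hv0 hv)
    (fun l => by split_ifs <;> fun_prop) isOpen_ball fun l w hw => ?_
  have hw : ‖w‖ ≤ 1 := (mem_ball_zero_iff.mp hw).le
  refine (norm_tailPowerSeries_term_le hv0 hw l).trans (mul_le_of_le_one_right ?_ hw)
  split_ifs <;> simp [hv0 l]

lemma tailPowerSeries_ofReal (x : ℝ) :
    tailPowerSeries v m x = ((∑' l, if m < l then v l * x ^ (l - m) else 0 : ℝ) : ℂ) := by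
  rw [Complex.ofReal_tsum, tailPowerSeries]
  congr 1 with l
  split_ifs <;> simp

lemma re_tailPowerSeries_ofReal_nonneg (hv0 : ∀ l, 0 ≤ v l) {x : ℝ} (hx : 0 ≤ x) :
    0 ≤ (tailPowerSeries v m x).re := by
  rw [tailPowerSeries_ofReal, Complex.ofReal_re]
  exact tsum_nonneg fun l => by split_ifs <;> simp [mul_nonneg, hv0 l, pow_nonneg hx]

lemma tsum_mul_pow_eq (hv0 : ∀ l, 0 ≤ v l) (hv : Summable v) (h0 : v 0 = 0) {w : ℂ}
    (hw : ‖w‖ ≤ 1) : ∑' n, (v n : ℂ) * w ^ n = v 1 * w + w * tailPowerSeries v 1 w := by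
  have hs : Summable fun n => (v n : ℂ) * w ^ n :=
    hv.of_norm_bounded fun n => by
      rw [norm_mul, norm_pow, Complex.norm_of_nonneg (hv0 n)]
      exact mul_le_of_le_one_right (hv0 n) (pow_le_one₀ (norm_nonneg w) hw)
  rw [tsum_eq_add_tsum_ite_one_lt hs (by simp [h0]), tailPowerSeries, ← tsum_mul_left, pow_one]
  congr 1
  refine tsum_congr fun n => ?_
  split_ifs with h
  · rw [mul_left_comm, ← pow_succ', Nat.sub_add_cancel h.le]
  · simp

end TailPowerSeries

lemma norm_tsum_mul_pow_le {v : ℕ → ℝ} (hv0 : ∀ l, 0 ≤ v l) (hv : Summable v) (h0 : v 0 = 0)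
    (h1 : ∑' l, v l = 1) {ρ : ℝ} (hρ : ρ ≤ 1) {w : ℂ} (hw : ‖w‖ ≤ ρ) :
    ‖∑' n, (v n : ℂ) * w ^ n‖ ≤ (v 1 + (1 - v 1) * ρ) * ‖w‖ := by
  have hw1 : ‖w‖ ≤ 1 := hw.trans hρ
  have htail : ∑' l, (if 1 < l then v l else 0) = 1 - v 1 := by
    rw [← h1, tsum_eq_add_tsum_ite_one_lt hv h0, add_sub_cancel_left]
  have hv1 : 0 ≤ 1 - v 1 := htail ▸ tsum_nonneg fun l => by split_ifs <;> simp [hv0 l]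
  rw [tsum_mul_pow_eq hv0 hv h0 hw1]
  calc ‖(v 1 : ℂ) * w + w * tailPowerSeries v 1 w‖
      ≤ v 1 * ‖w‖ + ‖w‖ * ((1 - v 1) * ‖w‖) := by
        refine (norm_add_le _ _).trans
          (add_le_add (by rw [norm_mul, Complex.norm_of_nonneg (hv0 1)]) ?_)
        rw [norm_mul, ← htail]
        exact mul_le_mul_of_nonneg_left (norm_tailPowerSeries_le hv0 hv hw1) (norm_nonneg w)
    _ ≤ v 1 * ‖w‖ + ‖w‖ * ((1 - v 1) * ρ) := by gcongr
    _ = (v 1 + (1 - v 1) * ρ) * ‖w‖ := by ring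

lemma mapsTo_ofReal_Icc {v : ℕ → ℝ} (hv0 : ∀ l, 0 ≤ v l) {f : ℂ → ℂ}
    (hf : ∀ z : ℂ, ‖z‖ ≤ 1 → f z = ∑' n, (v n : ℂ) * z ^ n) {ρ c : ℝ} (hρ : ρ ≤ 1) (hc : c ≤ 1)
    (hfc : ∀ w, ‖w‖ ≤ ρ → ‖f w‖ ≤ c * ‖w‖) :
    MapsTo f (Complex.ofReal '' Icc 0 ρ) (Complex.ofReal '' Icc 0 ρ) := by
  rintro _ ⟨x, ⟨hx0, hxρ⟩, rfl⟩
  have hxn : ‖(x : ℂ)‖ ≤ ρ := by rwa [Complex.norm_of_nonneg hx0]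
  have hfx : f x = ((∑' n, v n * x ^ n : ℝ) : ℂ) := by
    rw [hf _ (hxn.trans hρ), Complex.ofReal_tsum]
    push_cast
    rfl
  have hy0 : 0 ≤ ∑' n, v n * x ^ n := tsum_nonneg fun n => mul_nonneg (hv0 n) (pow_nonneg hx0 n)
  refine ⟨_, ⟨hy0, ?_⟩, hfx.symm⟩
  have := hfc _ hxn
  rw [hfx, Complex.norm_of_nonneg hy0] at this
  nlinarith [norm_nonneg (x : ℂ)]

structure GeometricFactors (F : ℕ → ℂ → ℂ) (ρ C c : ℝ) : Prop where
  differentiableOn : ∀ j, DifferentiableOn ℂ (F j) (ball 0 ρ)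
  norm_sub_one_le : ∀ j, ∀ z ∈ ball (0 : ℂ) ρ, ‖F j z - 1‖ ≤ C * c ^ j
  ofReal_ne_zero : ∀ j, ∀ x ∈ Ico (0 : ℝ) ρ, F j x ≠ 0
  nonneg : 0 ≤ c
  lt_one : c < 1

lemma geometricFactors_iterate {f G : ℂ → ℂ} {ρ c a : ℝ} (hc0 : 0 ≤ c) (hc1 : c < 1)
    (hfc : ∀ w, ‖w‖ ≤ ρ → ‖f w‖ ≤ c * ‖w‖) (hfd : DifferentiableOn ℂ f (ball 0 ρ))
    (hfr : MapsTo f (Complex.ofReal '' Icc 0 ρ) (Complex.ofReal '' Icc 0 ρ)) (ha : 0 < a)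
    (hGd : DifferentiableOn ℂ G (ball 0 ρ)) (hGc : ∀ w, ‖w‖ ≤ ρ → ‖G w‖ ≤ ‖w‖)
    (hGr : ∀ x ∈ Icc (0 : ℝ) ρ, 0 ≤ (G x).re) :
    GeometricFactors (fun j z => 1 + (a : ℂ)⁻¹ * G (f^[j] z)) ρ (a⁻¹ * ρ) c where
  differentiableOn j := by
    have hmaps : MapsTo f (ball 0 ρ) (ball 0 ρ) := fun w hw => by
      rw [mem_ball_zero_iff] at hw ⊢
      exact ((hfc w hw.le).trans (mul_le_of_le_one_left (norm_nonneg w) hc1.le)).trans_lt hw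
    exact (differentiableOn_const 1).add
      ((hGd.comp (hfd.iterate hmaps j) (hmaps.iterate j)).const_mul _)
  norm_sub_one_le j z hz := by
    have hz : ‖z‖ ≤ ρ := (mem_ball_zero_iff.mp hz).le
    have hj := norm_iterate_le hc0 hc1.le hfc j hz
    rw [add_sub_cancel_left, norm_mul, norm_inv, Complex.norm_of_nonneg ha.le]
    calc a⁻¹ * ‖G (f^[j] z)‖ ≤ a⁻¹ * (c ^ j * ‖z‖) :=
          mul_le_mul_of_nonneg_left ((hGc _ (hj.trans ?_)).trans hj) (inv_nonneg.mpr ha.le)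
      _ ≤ a⁻¹ * ρ * c ^ j := by
          rw [mul_assoc, mul_comm ρ]
          gcongr
    exact (mul_le_of_le_one_left (norm_nonneg z) (pow_le_one₀ hc0 hc1.le)).trans hz
  ofReal_ne_zero j x hx := by
    obtain ⟨y, hy, hfy⟩ := hfr.iterate j ⟨x, Ico_subset_Icc_self hx, rfl⟩
    refine ne_of_apply_ne Complex.re (ne_of_gt ?_)
    rw [← hfy, ← Complex.ofReal_inv, Complex.add_re, Complex.re_ofReal_mul, Complex.one_re,
      Complex.zero_re]
    have := hGr y hy
    positivity
  nonneg := hc0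
  lt_one := hc1

namespace GeometricFactors

variable {F : ℕ → ℂ → ℂ} {ρ C c : ℝ}

lemma summable_norm_sub_one (hF : GeometricFactors F ρ C c) {z : ℂ} (hz : z ∈ ball 0 ρ) :
    Summable fun j => ‖F j z - 1‖ :=
  ((summable_geometric_of_lt_one hF.nonneg hF.lt_one).mul_left C).of_nonneg_of_le
    (fun _ => norm_nonneg _) fun j => hF.norm_sub_one_le j z hz

lemma eventually_ne_zero (hF : GeometricFactors F ρ C c) :
    ∀ᶠ j in atTop, ∀ z ∈ ball (0 : ℂ) ρ, F j z ≠ 0 := by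
  have hlim : Tendsto (fun j => C * c ^ j) atTop (𝓝 0) := by
    simpa using (tendsto_pow_atTop_nhds_zero_of_lt_one hF.nonneg hF.lt_one).const_mul C
  filter_upwards [hlim.eventually (gt_mem_nhds one_pos)] with j hj z hz h
  have := hF.norm_sub_one_le j z hz
  rw [h, zero_sub, norm_neg, norm_one] at this
  linarith

lemma isOpen_setOf_forall_ne_zero (hF : GeometricFactors F ρ C c) :
    IsOpen {z ∈ ball (0 : ℂ) ρ | ∀ j, F j z ≠ 0} := by
  obtain ⟨N, hN⟩ := eventually_atTop.mp hF.eventually_ne_zero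
  rw [isOpen_iff_mem_nhds]
  rintro z ⟨hzρ, hz⟩
  have hnear : ∀ j ∈ Finset.range N, ∀ᶠ w in 𝓝 z, F j w ≠ 0 := fun j _ =>
    ((hF.differentiableOn j).continuousOn.continuousAt (isOpen_ball.mem_nhds hzρ)).eventually_ne
      (hz j)
  filter_upwards [isOpen_ball.mem_nhds hzρ, (eventually_all_finset _).mpr hnear] with w hwρ hw
  refine ⟨hwρ, fun j => ?_⟩
  rcases lt_or_ge j N with hj | hj
  · exact hw j (Finset.mem_range.mpr hj)
  · exact hN j hj w hwρ

lemma ofReal_Icc_subset (hF : GeometricFactors F ρ C c) {r : ℝ} (hr : r < ρ) :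
    Complex.ofReal '' Icc 0 r ⊆ {z ∈ ball (0 : ℂ) ρ | ∀ j, F j z ≠ 0} := by
  rintro _ ⟨x, ⟨hx0, hxr⟩, rfl⟩
  refine ⟨?_, fun j => hF.ofReal_ne_zero j x ⟨hx0, hxr.trans_lt hr⟩⟩
  rw [mem_ball_zero_iff, Complex.norm_of_nonneg hx0]
  exact hxr.trans_lt hr

lemma shift (hF : GeometricFactors F ρ C c) :
    GeometricFactors (fun j => F (j + 1)) ρ (C * c) c where
  differentiableOn j := hF.differentiableOn (j + 1)
  norm_sub_one_le j z hz := (hF.norm_sub_one_le (j + 1) z hz).trans_eq (by ring)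
  ofReal_ne_zero j := hF.ofReal_ne_zero (j + 1)
  nonneg := hF.nonneg
  lt_one := hF.lt_one

lemma eventually_norm_zpow_neg_sub_one_le (hF : GeometricFactors F ρ C c) :
    ∀ᶠ j in atTop, ∀ z ∈ ball (0 : ℂ) ρ, ‖F j z ^ (-(j : ℤ)) - 1‖ ≤ 3 * C * (j * c ^ j) := by
  have h1 : Tendsto (fun j => C * c ^ j) atTop (𝓝 0) := by
    simpa using (tendsto_pow_atTop_nhds_zero_of_lt_one hF.nonneg hF.lt_one).const_mul C
  have h2 : Tendsto (fun j : ℕ => j * (C * c ^ j)) atTop (𝓝 0) := by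
    simpa [mul_left_comm] using
      (tendsto_self_mul_const_pow_of_lt_one hF.nonneg hF.lt_one).const_mul C
  filter_upwards [h1.eventually (ge_mem_nhds one_half_pos),
    h2.eventually (ge_mem_nhds one_half_pos)] with j hj1 hj2 z hz
  exact (norm_zpow_neg_sub_one_le (hF.norm_sub_one_le j z hz) hj1 hj2).trans_eq (by ring)

lemma exists_tendstoUniformlyOn_prod_zpow_neg (hF : GeometricFactors F ρ C c) {W K T : Set ℂ}
    (hW : IsOpen W)
    (hWF : W ⊆ {z ∈ ball (0 : ℂ) ρ | ∀ j, F j z ≠ 0}) (hK : IsCompact K) (hKW : K ⊆ W)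
    (hTK : T ⊆ K) :
    ∃ G : ℂ → ℂ,
      TendstoUniformlyOn (fun n z => ∏ j ∈ Finset.Icc 1 n, F j z ^ (-(j : ℤ))) G atTop T ∧
      DifferentiableOn ℂ G T ∧ (∃ M, ∀ z ∈ T, ‖G z‖ ≤ M) ∧ ∀ z ∈ T, G z ≠ 0 := by
  set P : ℕ → ℂ → ℂ := fun j z => F j z ^ (-(j : ℤ))
  have hPd : ∀ j, DifferentiableOn ℂ (P j) W := fun j =>
    ((hF.differentiableOn j).mono fun z hz => (hWF hz).1).zpow
      (Or.inl fun z hz => (hWF hz).2 j)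
  have hu : Summable fun j : ℕ => 3 * C * (j * c ^ j) := by
    simpa using (summable_pow_mul_geometric_of_norm_lt_one 1
      (by rw [Real.norm_of_nonneg hF.nonneg]; exact hF.lt_one)).mul_left (3 * C)
  have hb : ∀ᶠ j in atTop, ∀ z ∈ W, ‖P j z - 1‖ ≤ 3 * C * (j * c ^ j) := by
    filter_upwards [hF.eventually_norm_zpow_neg_sub_one_le] with j hj z hz
      using hj z (hWF hz).1
  have hlim := (hasProdLocallyUniformlyOn_of_eventually_norm_sub_one_le hW
    (fun j => (hPd j).continuousOn) hu hb).tendstoLocallyUniformlyOn_finsetRange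
  have hGd : DifferentiableOn ℂ (fun z => ∏' j, P j z) W := hlim.differentiableOn
    (Eventually.of_forall fun n => DifferentiableOn.fun_finsetProd fun j _ => hPd j) hW
  obtain ⟨M, hM⟩ := hK.exists_bound_of_continuousOn (hGd.continuousOn.mono hKW)
  refine ⟨_, ?_, hGd.mono (hTK.trans hKW), ⟨M, fun z hz => hM z (hTK hz)⟩, fun z hz => ?_⟩
  · have hKT := ((tendstoLocallyUniformlyOn_iff_tendstoUniformlyOn_of_compact hK).mp
      (hlim.mono hKW)).mono hTK
    intro U hU
    filter_upwards [(tendsto_add_atTop_nat 1).eventually (hKT U hU)] with n hn z hz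
    have hnz := hn z hz
    rw [Finset.prod_range_succ'] at hnz
    simpa only [Finset.prod_Icc_one_eq_prod_range, P, Nat.cast_zero, neg_zero, zpow_zero,
      mul_one] using hnz
  · have hzW := hKW (hTK hz)
    have hs : Summable fun j => ‖P j z - 1‖ :=
      hu.of_norm_bounded_eventually (by
        simpa [Nat.cofinite_eq_atTop] using hb.mono fun j hj => hj z hzW)
    simpa using tprod_one_add_ne_zero_of_summable (f := fun j => P j z - 1)
      (fun j => by rw [add_sub_cancel]; exact zpow_ne_zero _ ((hWF hzW).2 j)) hs

end GeometricFactors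

lemma geometricFactors_tailPowerSeries_iterate {p v : ℕ → ℝ} {f : ℂ → ℂ} (hp0 : p 0 = 0)
    (hp1 : p 1 < 1) (hpnn : ∀ k, 0 ≤ p k) (hps : Summable p) (hpsum : ∑' k, p k = 1)
    (hf : ∀ z : ℂ, ‖z‖ ≤ 1 → f z = ∑' n, (p n : ℂ) * z ^ n) {ρ : ℝ} (hρ0 : 0 ≤ ρ) (hρ1 : ρ < 1)
    (hvnn : ∀ k, 0 ≤ v k) (hvs : Summable v) (hvsum : ∑' k, v k ≤ 1) (m : ℕ) {a : ℝ}
    (ha : 0 < a) :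
    GeometricFactors (fun j z => 1 + (a : ℂ)⁻¹ * tailPowerSeries v m (f^[j] z)) ρ (a⁻¹ * ρ)
      (p 1 + (1 - p 1) * ρ) := by
  have hp1' : p 1 ≤ 1 := by linarith
  have hc0 : 0 ≤ p 1 + (1 - p 1) * ρ := by nlinarith [hpnn 1]
  have hc1 : p 1 + (1 - p 1) * ρ < 1 := by nlinarith
  have hfc : ∀ w, ‖w‖ ≤ ρ → ‖f w‖ ≤ (p 1 + (1 - p 1) * ρ) * ‖w‖ := fun w hw =>
    hf w (hw.trans hρ1.le) ▸ norm_tsum_mul_pow_le hpnn hps hp0 hpsum hρ1.le hw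
  have hball : ball (0 : ℂ) ρ ⊆ ball 0 1 := ball_subset_ball hρ1.le
  have hfd : DifferentiableOn ℂ f (ball 0 ρ) := by
    have hg : DifferentiableOn ℂ (fun w => (p 1 : ℂ) * w + w * tailPowerSeries p 1 w) (ball 0 1) :=
      (differentiableOn_id.const_mul _).add (differentiableOn_id.mul
        (differentiableOn_tailPowerSeries hpnn hps))
    refine (hg.mono hball).congr fun w hw => ?_
    have hw : ‖w‖ ≤ 1 := (mem_ball_zero_iff.mp (hball hw)).le
    exact (hf w hw).trans (tsum_mul_pow_eq hpnn hps hp0 hw)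
  exact geometricFactors_iterate hc0 hc1 hfc hfd (mapsTo_ofReal_Icc hpnn hf hρ1.le hc1.le hfc) ha
    ((differentiableOn_tailPowerSeries hvnn hvs).mono hball)
    (fun w hw => norm_tailPowerSeries_le_norm hvnn hvs hvsum (hw.trans hρ1.le))
    fun x hx => re_tailPowerSeries_ofReal_nonneg hvnn hx.1

lemma iterate_div_pow_eq_mul_prod {p : ℕ → ℝ} {f : ℂ → ℂ} (hp0 : p 0 = 0) (hp1 : 0 < p 1)
    (hpnn : ∀ k, 0 ≤ p k) (hps : Summable p) (hpsum : ∑' k, p k = 1)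
    (hf : ∀ z : ℂ, ‖z‖ ≤ 1 → f z = ∑' n, (p n : ℂ) * z ^ n) (n : ℕ) {z : ℂ} (hz : ‖z‖ ≤ 1) :
    f^[n] z / (p 1 : ℂ) ^ n =
      z * ∏ j ∈ Finset.range n, (1 + (p 1 : ℂ)⁻¹ * tailPowerSeries p 1 (f^[j] z)) := by
  have hp : (p 1 : ℂ) ≠ 0 := Complex.ofReal_ne_zero.mpr hp1.ne'
  have hmaps : MapsTo f (closedBall 0 1) (closedBall 0 1) := fun w hw => by
    rw [mem_closedBall_zero_iff] at hw ⊢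
    rw [hf w hw]
    exact (norm_tsum_mul_pow_le hpnn hps hp0 hpsum le_rfl hw).trans (by linarith)
  have hfw : ∀ w ∈ closedBall (0 : ℂ) 1,
      f w = p 1 * w * (1 + (p 1 : ℂ)⁻¹ * tailPowerSeries p 1 w) := fun w hw => by
    rw [hf w (mem_closedBall_zero_iff.mp hw), tsum_mul_pow_eq hpnn hps hp0
      (mem_closedBall_zero_iff.mp hw)]
    field_simp
  rw [iterate_eq_pow_mul_prod hmaps hfw n (mem_closedBall_zero_iff.mpr hz)]
  field_simp

theorem stmt_7_general
    (p : ℕ → ℝ) (hp0 : p 0 = 0) (hp1 : 0 < p 1) (hp1' : p 1 < 1)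
    (hpnn : ∀ k, 0 ≤ p k) (hpsum : ∑' k, p k = 1)
    (f : ℂ → ℂ) (hf : ∀ z : ℂ, ‖z‖ ≤ 1 → f z = ∑' n, (p n : ℂ) * z ^ n)
    (fIter : ℕ → ℂ → ℂ) (hf0 : ∀ z, fIter 0 z = z)
    (hfS : ∀ n z, fIter (n + 1) z = f (fIter n z))
    (A : ℕ → ℂ → ℂ)
    (hA : ∀ j z, A j z =
      1 + (p 1 : ℂ)⁻¹ * ∑' l : ℕ, if 1 < l then (p l : ℂ) * fIter j z ^ (l - 1) else 0)
    (S : ℂ → ℂ)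
    (hS : ∀ z : ℂ, ‖z‖ < 1 →
      Tendsto (fun n => fIter n z / (p 1 : ℂ) ^ n) atTop (𝓝 (S z)))
    (q : ℕ → ℝ) (hqnn : ∀ k, 0 ≤ q k) (hqsum : ∑' k, q k = 1)
    (ν : ℕ) (hν : 0 < q ν)
    (B : ℕ → ℂ → ℂ)
    (hB : ∀ n z, B n z =
      1 + (q ν : ℂ)⁻¹ * ∑' l : ℕ, if ν < l then (q l : ℂ) * fIter n z ^ (l - ν) else 0)
    (r : ℝ) (hr0 : 0 < r) (hr1 : r < 1)
    (Blim : ℂ → ℂ)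
    (hBlim : TendstoUniformlyOn (fun n z => ∏ j ∈ Finset.Icc 1 n, B j z) Blim atTop
      {z : ℂ | ‖z‖ ≤ r}) :
    ∃ θ : ℝ, 0 < θ ∧ θ < Real.pi / 2 ∧
      (∀ z : ℂ, z ≠ 0 → ‖z‖ ≤ r → |z.arg| ≤ θ →
        S z ≠ 0 ∧ (∀ k : ℕ, A k z ≠ 0) ∧ Blim z ≠ 0) ∧
      ∃ Cfun : ℂ → ℂ,
        TendstoUniformlyOn (fun n z => ∏ j ∈ Finset.Icc 1 n, A j z ^ (-(j : ℤ))) Cfun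
          atTop {z : ℂ | z ≠ 0 ∧ ‖z‖ ≤ r ∧ |z.arg| ≤ θ} ∧
        DifferentiableOn ℂ Cfun {z : ℂ | z ≠ 0 ∧ ‖z‖ ≤ r ∧ |z.arg| ≤ θ} ∧
        (∃ M : ℝ, ∀ z : ℂ, z ≠ 0 → ‖z‖ ≤ r → |z.arg| ≤ θ → ‖Cfun z‖ ≤ M) ∧
        (∀ z : ℂ, z ≠ 0 → ‖z‖ ≤ r → |z.arg| ≤ θ → Cfun z ≠ 0) := by
  obtain rfl : fIter = fun n => f^[n] := funext fun n => funext fun z => by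
    induction n with
    | zero => exact hf0 z
    | succ n ih => rw [hfS, ih, Function.iterate_succ_apply']
  obtain rfl : A = fun j z => 1 + (p 1 : ℂ)⁻¹ * tailPowerSeries p 1 (f^[j] z) := funext₂ hA
  obtain rfl : B = fun j z => 1 + (q ν : ℂ)⁻¹ * tailPowerSeries q ν (f^[j] z) := funext₂ hB
  have hps : Summable p := by by_contra h; simp [tsum_eq_zero_of_not_summable h] at hpsum
  have hqs : Summable q := by by_contra h; simp [tsum_eq_zero_of_not_summable h] at hqsum
  have hAF := geometricFactors_tailPowerSeries_iterate hp0 hp1' hpnn hps hpsum hf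
    (ρ := (1 + r) / 2) (by linarith) (by linarith) hpnn hps hpsum.le 1 hp1
  have hBF := (geometricFactors_tailPowerSeries_iterate hp0 hp1' hpnn hps hpsum hf
    (ρ := (1 + r) / 2) (by linarith) (by linarith) hqnn hqs hqsum.le ν hν).shift
  obtain ⟨θ, K, hθ0, hθ, hK, hKW, hsec⟩ := exists_sector_subset_compact
    (hAF.isOpen_setOf_forall_ne_zero.inter hBF.isOpen_setOf_forall_ne_zero) hr0
    (subset_inter (hAF.ofReal_Icc_subset (by linarith)) (hBF.ofReal_Icc_subset (by linarith)))
  obtain ⟨Cfun, hCu, hCd, ⟨M, hM⟩, hC0⟩ := hAF.exists_tendstoUniformlyOn_prod_zpow_neg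
    (hAF.isOpen_setOf_forall_ne_zero.inter hBF.isOpen_setOf_forall_ne_zero) inter_subset_left
    hK hKW hsec
  refine ⟨θ, hθ0, hθ, fun z hz0 hzr hzθ => ?_, Cfun, hCu, hCd,
    ⟨M, fun z h0 hr hθ => hM z ⟨h0, hr, hθ⟩⟩, fun z h0 hr hθ => hC0 z ⟨h0, hr, hθ⟩⟩
  obtain ⟨⟨hzρ, hA0⟩, -, hB0⟩ := hKW (hsec ⟨hz0, hzr, hzθ⟩)
  refine ⟨?_, hA0, ?_⟩
  · have hSz := (hS z (hzr.trans_lt hr1)).congr fun n =>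
      iterate_div_pow_eq_mul_prod hp0 hp1 hpnn hps hpsum hf n (hzr.trans hr1.le)
    refine right_ne_zero_of_mul (a := z⁻¹) (ne_zero_of_tendsto_prod_range hA0
      (hAF.summable_norm_sub_one hzρ) ?_)
    exact (hSz.const_mul z⁻¹).congr fun n => inv_mul_cancel_left₀ hz0 _
  · exact ne_zero_of_tendsto_prod_range hB0 (hBF.summable_norm_sub_one hzρ)
      (by simpa only [Finset.prod_Icc_one_eq_prod_range] using hBlim.tendsto_at hzr)

/-- For each `r ∈ (0,1)` there is `θ ∈ (0,π/2)` such that on the sector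
`D_{r,θ} = {z : 0 < |z| ≤ r, |arg z| ≤ θ}`: (a) `S(z) ≠ 0` and `A_k(z) ≠ 0` for all `k`;
(b) `B(z) ≠ 0`; (c) `∏_{j=1}^n A_j(z)^{−j}` converges uniformly to a bounded holomorphic
nowhere-vanishing function `C`. -/
theorem stmt_7
    (p : ℕ → ℝ) (hp0 : p 0 = 0) (hp1 : 0 < p 1) (hp1' : p 1 < 1)
    (hpnn : ∀ k, 0 ≤ p k) (hpsum : ∑' k, p k = 1)
    (hmean : Summable fun k : ℕ => (k : ℝ) * p k)
    (a : ℝ) (ha : a = ∑' k : ℕ, (k : ℝ) * p k) (ha1 : 1 < a)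
    (f : ℂ → ℂ) (hf : ∀ z : ℂ, ‖z‖ ≤ 1 → f z = ∑' n, (p n : ℂ) * z ^ n)
    (fIter : ℕ → ℂ → ℂ) (hf0 : ∀ z, fIter 0 z = z)
    (hfS : ∀ n z, fIter (n + 1) z = f (fIter n z))
    (A : ℕ → ℂ → ℂ)
    (hA : ∀ j z, A j z =
      1 + (p 1 : ℂ)⁻¹ * ∑' l : ℕ, if 1 < l then (p l : ℂ) * fIter j z ^ (l - 1) else 0)
    (S : ℂ → ℂ)
    (hS : ∀ z : ℂ, ‖z‖ < 1 →
      Tendsto (fun n => fIter n z / (p 1 : ℂ) ^ n) atTop (𝓝 (S z)))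
    (q : ℕ → ℝ) (hq0 : q 0 = 0) (hqnn : ∀ k, 0 ≤ q k) (hqsum : ∑' k, q k = 1)
    (ν : ℕ) (hν : 0 < q ν) (hνmin : ∀ i, 0 < q i → ν ≤ i)
    (B : ℕ → ℂ → ℂ)
    (hB : ∀ n z, B n z =
      1 + (q ν : ℂ)⁻¹ * ∑' l : ℕ, if ν < l then (q l : ℂ) * fIter n z ^ (l - ν) else 0)
    (r : ℝ) (hr0 : 0 < r) (hr1 : r < 1)
    (Blim : ℂ → ℂ)
    (hBlim : TendstoUniformlyOn (fun n z => ∏ j ∈ Finset.Icc 1 n, B j z) Blim atTop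
      {z : ℂ | ‖z‖ ≤ r}) :
    ∃ θ : ℝ, 0 < θ ∧ θ < Real.pi / 2 ∧
      (∀ z : ℂ, z ≠ 0 → ‖z‖ ≤ r → |z.arg| ≤ θ →
        S z ≠ 0 ∧ (∀ k : ℕ, A k z ≠ 0) ∧ Blim z ≠ 0) ∧
      ∃ Cfun : ℂ → ℂ,
        TendstoUniformlyOn (fun n z => ∏ j ∈ Finset.Icc 1 n, A j z ^ (-(j : ℤ))) Cfun
          atTop {z : ℂ | z ≠ 0 ∧ ‖z‖ ≤ r ∧ |z.arg| ≤ θ} ∧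
        DifferentiableOn ℂ Cfun {z : ℂ | z ≠ 0 ∧ ‖z‖ ≤ r ∧ |z.arg| ≤ θ} ∧
        (∃ M : ℝ, ∀ z : ℂ, z ≠ 0 → ‖z‖ ≤ r → |z.arg| ≤ θ → ‖Cfun z‖ ≤ M) ∧
        (∀ z : ℂ, z ≠ 0 → ‖z‖ ≤ r → |z.arg| ≤ θ → Cfun z ≠ 0) :=
  stmt_7_general p hp0 hp1 hp1' hpnn hpsum f hf fIter hf0 hfS A hA S hS q hqnn hqsum ν hν B hB r hr0
    hr1 Blim hBlim
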